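/- Let w ∈ ℝ^m with 1ᵀw = 1 and W = diag(w) - w wᵀ, with positive semidefinite square root W^{1/2}. Let Y ∈ ℝ^{p×m}, R ∈ ℝ^{p×p} symmetric positive definite, and b ∈ ℝ^p. Define ν = w + W^{1/2} (W^{1/2} Yᵀ R⁻¹ Y W^{1/2} + I)⁻¹ W^{1/2} Yᵀ R⁻¹ b. Then 1ᵀ ν = 1. -/
import Mathlib


open Matrix Finset

theorem stmt_7 (m p : ℕ) (w : Fin m → ℝ) (hsum : ∑ l, w l = 1)
    (W S : Matrix (Fin m) (Fin m) ℝ)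
    (hW : W = Matrix.diagonal w - Matrix.vecMulVec w w)
    (hS : S.PosSemidef) (hSS : S * S = W)
    (Y : Matrix (Fin p) (Fin m) ℝ) (R : Matrix (Fin p) (Fin p) ℝ) (hR : R.PosDef)
    (b : Fin p → ℝ) :
    ∑ l, (w l + ((S * (S * Yᵀ * R⁻¹ * Y * S + 1)⁻¹ * S * Yᵀ * R⁻¹) *ᵥ b) l) = 1 := by
  set u : Fin m → ℝ := fun _ => 1 with hu
  have hsymm : Sᵀ = S := hS.isHermitian
  have hWu : W *ᵥ u = 0 := by
    subst hW
    funext i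
    simp [Matrix.mulVec, dotProduct, Matrix.diagonal, Matrix.vecMulVec,
      Finset.mul_sum, ← Finset.sum_sub_distrib, hu]
    rw [Finset.sum_sub_distrib, ← Finset.mul_sum, hsum, mul_one, Finset.sum_ite_eq]
    simp
  have hSu : S *ᵥ u = 0 := by
    have h0 : (S *ᵥ u) ⬝ᵥ (S *ᵥ u) = 0 := by
      have : (S *ᵥ u) ⬝ᵥ (S *ᵥ u) = u ⬝ᵥ (W *ᵥ u) := by
        rw [← hSS, ← Matrix.mulVec_mulVec, Matrix.dotProduct_mulVec,
          ← Matrix.mulVec_transpose, hsymm]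
        exact dotProduct_comm _ _
      rw [this, hWu, dotProduct_zero]
    exact (dotProduct_self_eq_zero).mp h0
  have huS : u ᵥ* S = 0 := by
    rw [← hsymm, Matrix.vecMul_transpose, hSu]
  have key : ∀ (M : Matrix (Fin m) (Fin p) ℝ), u ⬝ᵥ ((S * M) *ᵥ b) = 0 := by
    intro M
    rw [Matrix.dotProduct_mulVec, ← Matrix.vecMul_vecMul, huS, Matrix.zero_vecMul,
      zero_dotProduct]
  have h2 : ∑ l, ((S * ((S * Yᵀ * R⁻¹ * Y * S + 1)⁻¹ * S * Yᵀ * R⁻¹)) *ᵥ b) l = 0 := by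
    have := key ((S * Yᵀ * R⁻¹ * Y * S + 1)⁻¹ * S * Yᵀ * R⁻¹)
    simpa [dotProduct, hu] using this
  rw [Finset.sum_add_distrib, hsum]
  have heq : S * (S * Yᵀ * R⁻¹ * Y * S + 1)⁻¹ * S * Yᵀ * R⁻¹
      = S * ((S * Yᵀ * R⁻¹ * Y * S + 1)⁻¹ * S * Yᵀ * R⁻¹) := by
    simp only [Matrix.mul_assoc]
  rw [heq, h2, add_zero]
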